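/- Let T > 0, n ∈ ℕ, p ∈ [1,∞), σ > 0, and let D ⊆ L^p((0,T);ℝⁿ) satisfy conditions (D1) and (D2) (every u ∈ D has a representative with values in {0,1}ⁿ and componentwise pointwise total variations summing to at most σ, and D is closed in L^p). For each k ∈ ℕ let I₁^k,…,I_{N_k}^k be pairwise disjoint open intervals in (0,T) whose closures cover [0,T] and which are nested in the sense that every interval I_r^{k+1} is contained in some interval I_i^k. Define Π_k : L^p((0,T);ℝⁿ) → ℝ^{n·N_k} by (Π_k u)_{(j-1)N_k + i} = (1/λ(I_i^k)) ∫_{I_i^k} u_j dλ for j = 1,…,n and i = 1,…,N_k, set C_{D,Π_k} := conv{Π_k(u) : u ∈ D}, and V_k := {v ∈ L^p((0,T);ℝⁿ) : Π_k(v) ∈ C_{D,Π_k}}. Then V_{k+1} ⊆ V_k for all k ∈ ℕ. -/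

import Mathlib

open MeasureTheory Set Filter
open scoped ENNReal

/-- The local averaging projection associated with a family of intervals
`(a i, b i)`, `i = 1,…,N`, sending `u` to the vector of averages of the
components `u_j` over the intervals. -/
noncomputable def proj (T : ℝ) (n : ℕ) (p : ℝ≥0∞) (N : ℕ) (a b : Fin N → ℝ)
    (u : Lp (Fin n → ℝ) p (volume.restrict (Ioo (0:ℝ) T))) :
    Fin n × Fin N → ℝ :=
  fun q => (b q.2 - a q.2)⁻¹ *
    ∫ t in Ioo (a q.2) (b q.2), (u : ℝ → Fin n → ℝ) t q.1
      ∂(volume.restrict (Ioo (0:ℝ) T))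

/-! Up to the finitely many endpoints, each coarse interval `I_i^k` is the disjoint union of the
fine intervals `I_r^{k+1}` it contains, so each coarse average is the length-weighted combination
of those fine averages: `Π_k = L ∘ Π_{k+1}` for a linear map `L`. Linear maps commute with convex
hulls, hence `Π_{k+1} v ∈ conv Π_{k+1}(D)` gives `Π_k v ∈ conv Π_k(D)`. -/

open scoped Function

theorem mem_convexHull_image_of_eq_linearMap_comp {𝕜 α E F : Type*} [Semiring 𝕜]
    [PartialOrder 𝕜] [AddCommMonoid E] [Module 𝕜 E] [AddCommMonoid F] [Module 𝕜 F]
    (L : E →ₗ[𝕜] F) {g : α → E} {h : α → F} (hgh : ∀ x, h x = L (g x))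
    {D : Set α} {x : α} (hx : g x ∈ convexHull 𝕜 (g '' D)) :
    h x ∈ convexHull 𝕜 (h '' D) := by
  have himage : h '' D = L '' (g '' D) := by
    rw [← image_comp]
    exact image_congr fun y _ => hgh y
  rw [himage, ← L.image_convexHull, hgh]
  exact mem_image_of_mem L hx

section Refinement

variable {M N : ℕ} {A B : Fin M → ℝ} {a b : Fin N → ℝ} {f : Fin N → Fin M}

theorem Ioo_ae_eq_biUnion_fiber (μ : Measure ℝ) [NullSingletonClass μ]
    (hdisj : Pairwise (Disjoint on fun i => Ioo (A i) (B i)))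
    (hf : ∀ r, Ioo (a r) (b r) ⊆ Ioo (A (f r)) (B (f r))) {i : Fin M}
    (hcov : Ioo (A i) (B i) ⊆ ⋃ r, Icc (a r) (b r)) :
    Ioo (A i) (B i) =ᵐ[μ] ⋃ r ∈ ({r | f r = i} : Finset (Fin N)), Ioo (a r) (b r) := by
  have hfiber_sub : (⋃ r ∈ ({r | f r = i} : Finset (Fin N)), Ioo (a r) (b r)) ⊆
      Ioo (A i) (B i) := by
    simp only [Finset.mem_filter_univ, iUnion_subset_iff]
    rintro r rfl
    exact hf r
  have hdiff_sub : Ioo (A i) (B i) \ ⋃ r ∈ ({r | f r = i} : Finset (Fin N)),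
      Ioo (a r) (b r) ⊆ range a ∪ range b := by
    rintro t ⟨ht, htU⟩
    obtain ⟨r, har, hbr⟩ := mem_iUnion.1 (hcov ht)
    by_contra hend
    simp only [mem_union, mem_range, not_or, not_exists] at hend
    have htr : t ∈ Ioo (a r) (b r) :=
      ⟨har.lt_of_ne (hend.1 r), hbr.lt_of_ne (Ne.symm (hend.2 r))⟩
    have hfr : f r = i := by
      by_contra hne
      exact disjoint_left.1 (hdisj hne) (hf r htr) ht
    exact htU (mem_biUnion ((Finset.mem_filter_univ r).2 hfr) htr)
  rw [ae_eq_set, sdiff_eq_empty.2 hfiber_sub, measure_empty]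
  exact ⟨measure_mono_null hdiff_sub (((finite_range a).union (finite_range b)).measure_zero μ),
    rfl⟩

theorem setIntegral_Ioo_eq_sum_fiber {E : Type*} [NormedAddCommGroup E] [NormedSpace ℝ E]
    (μ : Measure ℝ) [NullSingletonClass μ]
    (hdisj : Pairwise (Disjoint on fun i => Ioo (A i) (B i)))
    (hdisj' : Pairwise (Disjoint on fun r => Ioo (a r) (b r)))
    (hf : ∀ r, Ioo (a r) (b r) ⊆ Ioo (A (f r)) (B (f r))) {i : Fin M}
    (hcov : Ioo (A i) (B i) ⊆ ⋃ r, Icc (a r) (b r)) {g : ℝ → E} (hg : Integrable g μ) :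
    ∫ t in Ioo (A i) (B i), g t ∂μ =
      ∑ r ∈ ({r | f r = i} : Finset (Fin N)), ∫ t in Ioo (a r) (b r), g t ∂μ := by
  rw [setIntegral_congr_set (Ioo_ae_eq_biUnion_fiber μ hdisj hf hcov)]
  exact integral_biUnion_finset _ (fun r _ => measurableSet_Ioo)
    (fun r _ r' _ hne => hdisj' hne) (fun r _ => hg.integrableOn)

variable (A B a b f) in
noncomputable def coarsenAverages (ι : Type*) : (ι × Fin N → ℝ) →ₗ[ℝ] (ι × Fin M → ℝ) :=
  LinearMap.pi fun q => ∑ r ∈ ({r | f r = q.2} : Finset (Fin N)),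
    ((b r - a r) / (B q.2 - A q.2)) • LinearMap.proj (q.1, r)

theorem proj_eq_coarsenAverages_proj {T : ℝ} {n : ℕ} {p : ℝ≥0∞} [Fact (1 ≤ p)]
    (hab : ∀ r, a r < b r)
    (hdisj : Pairwise (Disjoint on fun i => Ioo (A i) (B i)))
    (hdisj' : Pairwise (Disjoint on fun r => Ioo (a r) (b r)))
    (hf : ∀ r, Ioo (a r) (b r) ⊆ Ioo (A (f r)) (B (f r)))
    (hcov : ∀ i, Ioo (A i) (B i) ⊆ ⋃ r, Icc (a r) (b r))
    (u : Lp (Fin n → ℝ) p (volume.restrict (Ioo (0:ℝ) T))) :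
    proj T n p M A B u = coarsenAverages A B a b f (Fin n) (proj T n p N a b u) := by
  funext ⟨j, i⟩
  have hint : Integrable (fun t => (u : ℝ → Fin n → ℝ) t j) (volume.restrict (Ioo (0:ℝ) T)) :=
    ((Lp.memLp u).integrable Fact.out).eval j
  simp only [proj, coarsenAverages, LinearMap.pi_apply, LinearMap.sum_apply,
    LinearMap.smul_apply, LinearMap.proj_apply, smul_eq_mul]
  rw [setIntegral_Ioo_eq_sum_fiber _ hdisj hdisj' hf (hcov i) hint, Finset.mul_sum]
  refine Finset.sum_congr rfl fun r _ => ?_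
  have hlen : b r - a r ≠ 0 := sub_ne_zero.2 (hab r).ne'
  field_simp

end Refinement

theorem stmt_6
    (T : ℝ) (n : ℕ) (p : ℝ≥0∞) [Fact (1 ≤ p)]
    (D : Set (Lp (Fin n → ℝ) p (volume.restrict (Ioo (0:ℝ) T))))
    (N : ℕ → ℕ) (a b : (k : ℕ) → Fin (N k) → ℝ)
    (hab : ∀ k i, a k i < b k i)
    (hsub : ∀ k i, Ioo (a k i) (b k i) ⊆ Ioo (0:ℝ) T)
    (hdisj : ∀ k, ∀ i i' : Fin (N k), i ≠ i' →
      Disjoint (Ioo (a k i) (b k i)) (Ioo (a k i') (b k i')))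
    (hcover : ∀ k, (⋃ i : Fin (N k), Icc (a k i) (b k i)) = Icc (0:ℝ) T)
    (hnested : ∀ k, ∀ r : Fin (N (k+1)), ∃ i : Fin (N k),
      Ioo (a (k+1) r) (b (k+1) r) ⊆ Ioo (a k i) (b k i)) :
    ∀ k : ℕ,
      {v : Lp (Fin n → ℝ) p (volume.restrict (Ioo (0:ℝ) T)) |
          proj T n p (N (k+1)) (a (k+1)) (b (k+1)) v ∈
            convexHull ℝ (proj T n p (N (k+1)) (a (k+1)) (b (k+1)) '' D)} ⊆
      {v : Lp (Fin n → ℝ) p (volume.restrict (Ioo (0:ℝ) T)) |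
          proj T n p (N k) (a k) (b k) v ∈
            convexHull ℝ (proj T n p (N k) (a k) (b k) '' D)} := by
  intro k v hv
  choose f hf using hnested k
  have hcov : ∀ i, Ioo (a k i) (b k i) ⊆ ⋃ r, Icc (a (k+1) r) (b (k+1) r) := fun i =>
    hcover (k+1) ▸ (hsub k i).trans Ioo_subset_Icc_self
  exact mem_convexHull_image_of_eq_linearMap_comp _
    (proj_eq_coarsenAverages_proj (hab (k+1)) (hdisj k) (hdisj (k+1)) hf hcov) hv
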